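/- For every Dyck word D, the number of right tunnels of D equals the number of even rises of Ψ(D): rt(D) = er(Ψ(D)). -/

import Mathlib

attribute [local instance] Classical.propDecidable

namespace DyckBij

/-- A word over `Bool` (`true` = up-step `u`, `false` = down-step `d`) is a Dyck word:
equally many `u`'s and `d`'s, and every prefix has at least as many `u`'s as `d`'s. -/
def IsDyck (w : List Bool) : Prop :=
  w.count false = w.count true ∧
    ∀ p : List Bool, p <+: w → p.count false ≤ p.count true

/-- `Matched w i j`: the `u` at (0-indexed) position `i` of `w` is matched (as in matched
parentheses) with the `d` at position `j`, i.e. `w = A u B d C` with `B` a Dyck word,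
`|A| = i` and `j = i + |B| + 1`. -/
def Matched (w : List Bool) (i j : ℕ) : Prop :=
  ∃ A B C : List Bool, IsDyck B ∧ w = A ++ true :: (B ++ false :: C) ∧
    A.length = i ∧ j = i + B.length + 1

/-- Positions `i` and `j` form a matched pair of steps of `w`. -/
def MatchPair (w : List Bool) (i j : ℕ) : Prop :=
  Matched w i j ∨ Matched w j i

/-- The 0-indexed reading order `σ^{(r)}` on a word of length `L`: the first `2r` positions
are read in order, and the remaining positions are read in zigzag
`2r, L-1, 2r+1, L-2, …` (0-indexed). For `r = 0` this is the zigzag order `σ`. -/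
def zigR (r L p : ℕ) : ℕ :=
  if p < 2 * r then p
  else if p % 2 = 0 then p / 2 + r
  else L + r - (p + 1) / 2

/-- The bijection `Ψ_r`: the `p`-th letter of `Ψ_r(w)` is `u` iff the match of the
`σ^{(r)}_p`-th step of `w` does not occur among the previously read steps
`σ^{(r)}_0, …, σ^{(r)}_{p-1}`. -/
noncomputable def psiR (r : ℕ) (w : List Bool) : List Bool :=
  List.ofFn fun p : Fin w.length =>
    if ∃ p' : ℕ, p' < (p : ℕ) ∧
        MatchPair w (zigR r w.length p') (zigR r w.length (p : ℕ))
    then false else true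

/-- The bijection `Ψ = Ψ_0`. -/
noncomputable def psi : List Bool → List Bool := psiR 0

/-- Number of tunnels of `w` with `|A| = |C| + 2r` (midpoint at `x = n + r`),
i.e. decompositions `w = A u B d C` with `B` a Dyck word; tunnels are indexed by `|A|`. -/
noncomputable def tunEq (r : ℕ) (w : List Bool) : ℕ :=
  {i : ℕ | ∃ A B C : List Bool, IsDyck B ∧ w = A ++ true :: (B ++ false :: C) ∧
    A.length = i ∧ A.length = C.length + 2 * r}.ncard

/-- Number of tunnels of `w` with `|A| > |C| + 2r` (midpoint in `x > n + r`). -/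
noncomputable def tunGt (r : ℕ) (w : List Bool) : ℕ :=
  {i : ℕ | ∃ A B C : List Bool, IsDyck B ∧ w = A ++ true :: (B ++ false :: C) ∧
    A.length = i ∧ C.length + 2 * r < A.length}.ncard

/-- Number of tunnels of `w` with `|A| ≤ |C| + 2r` (midpoint in `x ≤ n + r`). -/
noncomputable def tunLe (r : ℕ) (w : List Bool) : ℕ :=
  {i : ℕ | ∃ A B C : List Bool, IsDyck B ∧ w = A ++ true :: (B ++ false :: C) ∧
    A.length = i ∧ A.length ≤ C.length + 2 * r}.ncard

/-- Number of centered tunnels `ct(w)`. -/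
noncomputable def ctun (w : List Bool) : ℕ := tunEq 0 w

/-- Number of right tunnels `rt(w)`. -/
noncomputable def rtun (w : List Bool) : ℕ := tunGt 0 w

/-- Number of left tunnels `lt(w)`: tunnels with `|A| < |C|`. -/
noncomputable def ltun (w : List Bool) : ℕ :=
  {i : ℕ | ∃ A B C : List Bool, IsDyck B ∧ w = A ++ true :: (B ++ false :: C) ∧
    A.length = i ∧ A.length < C.length}.ncard

/-- Number of multitunnels of `w` with `|A| = |C| + 2r` (midpoint at `x = n + r`):
decompositions `w = A B C` with `B` a nonempty Dyck word, indexed by `(|A|, |B|)`. -/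
noncomputable def mtunEq (r : ℕ) (w : List Bool) : ℕ :=
  {q : ℕ × ℕ | ∃ A B C : List Bool, IsDyck B ∧ B ≠ [] ∧ w = A ++ B ++ C ∧
    A.length = q.1 ∧ B.length = q.2 ∧ A.length = C.length + 2 * r}.ncard

/-- Number of centered multitunnels `cmt(w)`. -/
noncomputable def cmtun (w : List Bool) : ℕ := mtunEq 0 w

/-- Number of hills `h(w)`: decompositions `w = X u d Y` with `X, Y` Dyck words. -/
noncomputable def numHills (w : List Bool) : ℕ :=
  {i : ℕ | ∃ X Y : List Bool, IsDyck X ∧ IsDyck Y ∧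
    w = X ++ true :: false :: Y ∧ X.length = i}.ncard

/-- Number of hills of `w` lying in `x > 2r`, i.e. with `|X| ≥ 2r`. -/
noncomputable def numHillsAfter (r : ℕ) (w : List Bool) : ℕ :=
  {i : ℕ | ∃ X Y : List Bool, IsDyck X ∧ IsDyck Y ∧
    w = X ++ true :: false :: Y ∧ X.length = i ∧ 2 * r ≤ X.length}.ncard

/-- Number of arches (equivalently, returns) `ret(w)`: decompositions
`w = X (u B d) Y` with `X, B, Y` Dyck words. -/
noncomputable def numArches (w : List Bool) : ℕ :=
  {i : ℕ | ∃ X B Y : List Bool, IsDyck X ∧ IsDyck B ∧ IsDyck Y ∧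
    w = X ++ true :: (B ++ false :: Y) ∧ X.length = i}.ncard

/-- Number of arches of `w` lying in `x ≥ 2r`, i.e. with `|X| ≥ 2r`. -/
noncomputable def numArchesAfter (r : ℕ) (w : List Bool) : ℕ :=
  {i : ℕ | ∃ X B Y : List Bool, IsDyck X ∧ IsDyck B ∧ IsDyck Y ∧
    w = X ++ true :: (B ++ false :: Y) ∧ X.length = i ∧ 2 * r ≤ X.length}.ncard

/-- Number of odd rises `odr(w)`: `u`-steps at odd 1-indexed positions
(even 0-indexed positions). -/
noncomputable def oddRises (w : List Bool) : ℕ :=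
  {p : ℕ | p < w.length ∧ p % 2 = 0 ∧ w.getD p false = true}.ncard

/-- Number of even rises `er(w)`: `u`-steps at even 1-indexed positions
(odd 0-indexed positions). -/
noncomputable def evenRises (w : List Bool) : ℕ :=
  {p : ℕ | p < w.length ∧ p % 2 = 1 ∧ w.getD p false = true}.ncard

/-- Number of odd rises of `w` at 1-indexed positions `> 2r`. -/
noncomputable def oddRisesAfter (r : ℕ) (w : List Bool) : ℕ :=
  {p : ℕ | p < w.length ∧ p % 2 = 0 ∧ 2 * r ≤ p ∧ w.getD p false = true}.ncard

/-- Number of even rises of `w` at 1-indexed positions `> 2r`. -/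
noncomputable def evenRisesAfter (r : ℕ) (w : List Bool) : ℕ :=
  {p : ℕ | p < w.length ∧ p % 2 = 1 ∧ 2 * r ≤ p ∧ w.getD p false = true}.ncard

/-- Number of `u`-steps of `w` at 1-indexed positions `≤ 2r`. -/
noncomputable def upstepsBefore (r : ℕ) (w : List Bool) : ℕ :=
  {p : ℕ | p < w.length ∧ p < 2 * r ∧ w.getD p false = true}.ncard

/-- Number of peaks of `w`: occurrences of the factor `u d`. -/
noncomputable def numPeaks (w : List Bool) : ℕ :=
  {i : ℕ | i + 2 ≤ w.length ∧ w.getD i false = true ∧ w.getD (i + 1) true = false}.ncard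

/-- Number of occurrences in `w` of a factor of length 3 beginning with `u`
and ending with `d` (occurrences of `u⋆d`). -/
noncomputable def numUStarD (w : List Bool) : ℕ :=
  {i : ℕ | i + 3 ≤ w.length ∧ w.getD i false = true ∧ w.getD (i + 2) true = false}.ncard

/-- `ih(w)`: 1 if `w` begins with the factor `u d`, else 0. -/
noncomputable def initHill (w : List Bool) : ℕ :=
  if w.take 2 = [true, false] then 1 else 0

/-- `fh(w)`: 1 if `w = X u d` with `X` a Dyck word, else 0. -/
noncomputable def finHill (w : List Bool) : ℕ :=
  if ∃ X : List Bool, IsDyck X ∧ w = X ++ [true, false] then 1 else 0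

/-- `π` avoids the pattern 321. -/
def Avoids321 {n : ℕ} (π : Equiv.Perm (Fin n)) : Prop :=
  ¬ ∃ i j k : Fin n, i < j ∧ j < k ∧ π k < π j ∧ π j < π i

/-- `π` avoids the pattern 132. -/
def Avoids132 {n : ℕ} (π : Equiv.Perm (Fin n)) : Prop :=
  ¬ ∃ i j k : Fin n, i < j ∧ j < k ∧ π i < π k ∧ π k < π j

/-- Number of fixed points of `π`. -/
noncomputable def fixedPts {n : ℕ} (π : Equiv.Perm (Fin n)) : ℕ :=
  {i : Fin n | π i = i}.ncard

/-- Number of excedances of `π`. -/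
noncomputable def excedances {n : ℕ} (π : Equiv.Perm (Fin n)) : ℕ :=
  {i : Fin n | i < π i}.ncard

/-- Number of descents of `π`. -/
noncomputable def descents {n : ℕ} (π : Equiv.Perm (Fin n)) : ℕ :=
  {i : ℕ | ∃ (h1 : i < n) (h2 : i + 1 < n), π ⟨i + 1, h2⟩ < π ⟨i, h1⟩}.ncard

/-- `α_r(π) = #{i : π(i) = i + r}` (stated 0-indexed, equivalent to the 1-indexed version). -/
noncomputable def alphaStat {n : ℕ} (r : ℕ) (π : Equiv.Perm (Fin n)) : ℕ :=
  {i : Fin n | (π i : ℕ) = (i : ℕ) + r}.ncard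

/-- `β_r(π) = #{i : i > r, π(i) = i}` (for 1-indexed `i`; 0-indexed this is `r ≤ i`). -/
noncomputable def betaStat {n : ℕ} (r : ℕ) (π : Equiv.Perm (Fin n)) : ℕ :=
  {i : Fin n | r ≤ (i : ℕ) ∧ π i = i}.ncard

/-!
Let `L = |D|`. The letter of `Ψ(D)` at the odd (0-indexed) position `2k - 1` reads step `L - k`
of `D`, after the steps `0, …, k - 1` and `L - k + 1, …, L - 1`. A `u` at `L - k` is matched
further right, hence already read; a `d` at `L - k` is matched by a `u` at some `i < L - k`,
which is unread exactly when `k ≤ i`. So the even rises of `Ψ(D)` are the positions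
`2 (L - j) - 1` for the matched pairs `(i, j)` with `L ≤ i + j`, and these pairs are the right
tunnels `A u B d C`, with `|A| = i` and `|C| = L - 1 - j`.
-/

def height (w : List Bool) (k : ℕ) : ℤ :=
  ((w.take k).count true : ℤ) - (w.take k).count false

@[simp] lemma height_zero (w : List Bool) : height w 0 = 0 := by
  simp [height]

lemma height_succ {w : List Bool} {i : ℕ} (hi : i < w.length) :
    height w (i + 1) = height w i + if w.getD i false then 1 else -1 := by
  rw [List.getD_eq_getElem _ _ hi]
  cases hwi : w[i] <;>
    simp [height, List.take_add_one, List.getElem?_eq_getElem hi, hwi] <;> ring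

lemma height_succ_of_getD_true {w : List Bool} {i : ℕ} (hi : i < w.length)
    (hu : w.getD i false = true) : height w (i + 1) = height w i + 1 := by
  rw [height_succ hi, if_pos hu]

lemma height_succ_of_getD_false {w : List Bool} {i : ℕ} (hi : i < w.length)
    (hd : w.getD i false = false) : height w (i + 1) = height w i - 1 := by
  rw [height_succ hi, hd, if_neg Bool.false_ne_true, sub_eq_add_neg]

lemma height_append_length_add (u v : List Bool) (t : ℕ) :
    height (u ++ v) (u.length + t) = height u u.length + height v t := by
  simp only [height, List.take_append, List.take_length, List.count_append,
    List.take_of_length_le (Nat.le_add_right _ _), Nat.add_sub_cancel_left]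
  push_cast; ring

lemma height_append_of_le_length {u : List Bool} (v : List Bool) {t : ℕ}
    (ht : t ≤ u.length) : height (u ++ v) t = height u t := by
  simp only [height, List.take_append_of_le_length ht]

lemma isDyck_iff_height {w : List Bool} :
    IsDyck w ↔ height w w.length = 0 ∧ ∀ k ≤ w.length, 0 ≤ height w k := by
  simp only [IsDyck, height, List.take_length, List.prefix_iff_eq_take, sub_nonneg,
    sub_eq_zero, Nat.cast_le, Nat.cast_inj]
  constructor
  · rintro ⟨hcount, hpre⟩
    exact ⟨hcount.symm, fun k _ => hpre _ (by rw [List.length_take_of_le ‹_›])⟩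
  · rintro ⟨hcount, hpre⟩
    refine ⟨hcount.symm, fun p hp => ?_⟩
    rw [hp]
    exact hpre _ (hp ▸ List.length_take_le' _ _)

lemma height_of_eq_append_cons {w A B C : List Bool} (hw : w = A ++ true :: (B ++ false :: C))
    {t : ℕ} (ht : t ≤ B.length) :
    height w (A.length + 1 + t) = height w (A.length + 1) + height B t := by
  have hw' : w = (A ++ [true]) ++ (B ++ false :: C) := by simp [hw]
  have hlen : (A ++ [true]).length = A.length + 1 := by simp
  have h0 := height_append_length_add (A ++ [true]) (B ++ false :: C) 0
  have ht' := height_append_length_add (A ++ [true]) (B ++ false :: C) t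
  rw [height_append_of_le_length _ ht] at ht'
  rw [hlen, ← hw'] at h0 ht'
  simp only [add_zero, height_zero] at h0
  rw [ht', h0]

lemma eq_take_append_cons_append_cons_drop {w : List Bool} {i j : ℕ} (hij : i < j)
    (hj : j < w.length) (hi : w.getD i false = true) (hj' : w.getD j false = false) :
    w = w.take i ++ true :: ((w.drop (i + 1)).take (j - (i + 1)) ++ false :: w.drop (j + 1)) := by
  rw [List.getD_eq_getElem _ _ (by omega)] at hi
  rw [List.getD_eq_getElem _ _ hj] at hj'
  have hdrop : (w.drop (i + 1)).drop (j - (i + 1)) = w.drop j := by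
    rw [List.drop_drop]; congr 1; omega
  conv_lhs => rw [← List.take_append_drop i w, List.drop_eq_getElem_cons (by omega), hi,
    ← List.take_append_drop (j - (i + 1)) (w.drop (i + 1)), hdrop,
    List.drop_eq_getElem_cons hj, hj']

lemma matched_iff_height {w : List Bool} {i j : ℕ} :
    Matched w i j ↔ i < j ∧ j < w.length ∧ w.getD i false = true ∧
      w.getD j false = false ∧ height w j = height w (i + 1) ∧
      ∀ k, i + 1 ≤ k → k ≤ j → height w (i + 1) ≤ height w k := by
  constructor
  · rintro ⟨A, B, C, hB, hw, rfl, rfl⟩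
    have hheight := fun t => height_of_eq_append_cons hw (t := t)
    rw [isDyck_iff_height] at hB
    have hw' : w = (A ++ true :: B) ++ false :: C := by simp [hw]
    refine ⟨by omega, by simp [hw]; omega, by simp [hw],
      by rw [hw', List.getD_append_right _ _ _ _ (by simp; omega)]; simp,
      by rw [add_right_comm, hheight _ le_rfl, hB.1, add_zero], fun k hk hkj => ?_⟩
    obtain ⟨t, rfl⟩ := Nat.exists_eq_add_of_le hk
    rw [hheight t (by omega)]
    linarith [hB.2 t (by omega)]
  · rintro ⟨hij, hj, hi, hj', hjh, hmin⟩
    have hw := eq_take_append_cons_append_cons_drop hij hj hi hj'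
    have hA : (w.take i).length = i := List.length_take_of_le (by omega)
    have hB : ((w.drop (i + 1)).take (j - (i + 1))).length = j - (i + 1) := by
      simp; omega
    refine ⟨_, _, _, ?_, hw, hA, by omega⟩
    have hheight := fun t => height_of_eq_append_cons hw (t := t)
    rw [hA, hB] at hheight
    rw [isDyck_iff_height, hB]
    refine ⟨?_, fun t ht => ?_⟩
    · have := hheight _ le_rfl
      rw [show i + 1 + (j - (i + 1)) = j by omega] at this
      linarith
    · linarith [hheight t ht, hmin (i + 1 + t) (by omega) (by omega)]

section Matched

variable {w : List Bool} {i j : ℕ}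

lemma Matched.lt (h : Matched w i j) : i < j := (matched_iff_height.mp h).1

lemma Matched.lt_length (h : Matched w i j) : j < w.length := (matched_iff_height.mp h).2.1

lemma Matched.getD_left (h : Matched w i j) : w.getD i false = true :=
  (matched_iff_height.mp h).2.2.1

lemma Matched.getD_right (h : Matched w i j) : w.getD j false = false :=
  (matched_iff_height.mp h).2.2.2.1

lemma Matched.unique_left {i' : ℕ} (h : Matched w i j) (h' : Matched w i' j) : i = i' := by
  obtain ⟨hij, hj, hi, -, hjh, hmin⟩ := matched_iff_height.mp h
  obtain ⟨hij', -, hi', -, hjh', hmin'⟩ := matched_iff_height.mp h'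
  have hsi := height_succ_of_getD_true (by omega) hi
  have hsi' := height_succ_of_getD_true (by omega) hi'
  by_contra hne
  rcases Nat.lt_or_gt_of_ne hne with hlt | hlt
  · linarith [hmin i' (by omega) (by omega)]
  · linarith [hmin' i (by omega) (by omega)]

lemma Matched.unique_right {j' : ℕ} (h : Matched w i j) (h' : Matched w i j') : j = j' := by
  obtain ⟨hij, hj, -, hd, hjh, hmin⟩ := matched_iff_height.mp h
  obtain ⟨hij', hj', -, hd', hjh', hmin'⟩ := matched_iff_height.mp h'
  have hsj := height_succ_of_getD_false (by omega) hd
  have hsj' := height_succ_of_getD_false (by omega) hd'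
  by_contra hne
  rcases Nat.lt_or_gt_of_ne hne with hlt | hlt
  · linarith [hmin' (j + 1) (by omega) (by omega)]
  · linarith [hmin (j' + 1) (by omega) (by omega)]

lemma IsDyck.exists_matched_of_getD_true (hD : IsDyck w) (hi : i < w.length)
    (hu : w.getD i false = true) : ∃ j, Matched w i j := by
  obtain ⟨hL, hnn⟩ := isDyck_iff_height.mp hD
  have hsi := height_succ_of_getD_true hi hu
  have hex : ∃ k, i + 1 ≤ k ∧ height w k ≤ height w i :=
    ⟨w.length, hi, by linarith [hnn i hi.le]⟩
  obtain ⟨him, hm⟩ := Nat.find_spec hex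
  have above : ∀ k, i + 1 ≤ k → k < Nat.find hex → height w i < height w k := fun k hk hkm =>
    not_le.mp fun hle => Nat.find_min hex hkm ⟨hk, hle⟩
  have hmL : Nat.find hex ≤ w.length := Nat.find_min' hex ⟨hi, by linarith [hnn i hi.le]⟩
  obtain ⟨j, hj⟩ : ∃ j, Nat.find hex = j + 1 := ⟨Nat.find hex - 1, by omega⟩
  rw [hj] at him hm above hmL
  have hij : i < j := by
    by_contra hji
    rw [show j = i by omega] at hm
    linarith
  have habove := above j (by omega) (by omega)
  cases hd : w.getD j false
  swap
  · linarith [height_succ_of_getD_true (by omega) hd]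
  have hsj := height_succ_of_getD_false (by omega) hd
  refine ⟨j, matched_iff_height.mpr ⟨hij, by omega, hu, hd, by omega, fun k hk hkj => ?_⟩⟩
  have := above k hk (by omega)
  omega

lemma IsDyck.exists_matched_of_getD_false (hD : IsDyck w) (hj : j < w.length)
    (hd : w.getD j false = false) : ∃ i, Matched w i j := by
  obtain ⟨-, hnn⟩ := isDyck_iff_height.mp hD
  have hsj := height_succ_of_getD_false hj hd
  set m := Nat.findGreatest (fun k => height w k ≤ height w (j + 1)) j
  have hm : height w m ≤ height w (j + 1) :=
    Nat.findGreatest_spec (P := fun k => height w k ≤ height w (j + 1)) (Nat.zero_le j)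
      (by rw [height_zero]; exact hnn _ hj)
  have hmj : m ≤ j := Nat.findGreatest_le j
  have above : ∀ k, m < k → k ≤ j → height w (j + 1) < height w k := fun k hmk hkj =>
    not_le.mp (Nat.findGreatest_is_greatest hmk hkj)
  have hmj' : m < j := by
    by_contra hjm
    rw [show m = j by omega] at hm
    linarith
  have habove := above (m + 1) (by omega) (by omega)
  cases hu : w.getD m false
  · linarith [height_succ_of_getD_false (by omega) hu]
  have hsm := height_succ_of_getD_true (by omega) hu
  refine ⟨m, matched_iff_height.mpr ⟨hmj', hj, hu, hd, by omega, fun k hk hkj => ?_⟩⟩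
  have := above k (by omega) hkj
  omega

lemma IsDyck.exists_matchPair (hD : IsDyck w) (hi : i < w.length) : ∃ j, MatchPair w i j := by
  cases hi' : w.getD i false
  · obtain ⟨j, hj⟩ := hD.exists_matched_of_getD_false hi hi'
    exact ⟨j, Or.inr hj⟩
  · obtain ⟨j, hj⟩ := hD.exists_matched_of_getD_true hi hi'
    exact ⟨j, Or.inl hj⟩

end Matched

lemma zigR_zero_image_Iio {L k : ℕ} (hk : 2 * k ≤ L) :
    zigR 0 L '' Set.Iio (2 * k - 1) = Set.Iio k ∪ Set.Ioo (L - k) L := by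
  ext q
  simp only [zigR, Set.mem_image, Set.mem_Iio, Set.mem_union, Set.mem_Ioo, Nat.not_lt_zero,
    if_false, Nat.mul_zero, add_zero]
  constructor
  · rintro ⟨p, hp, rfl⟩
    split_ifs <;> omega
  · rintro (hq | hq)
    · exact ⟨2 * q, by omega, by simp⟩
    · exact ⟨2 * (L - q) - 1, by omega, by rw [if_neg (by omega)]; omega⟩

@[simp] lemma psi_length (D : List Bool) : (psi D).length = D.length := by
  simp [psi, psiR]

lemma getD_psi_eq_true_iff {D : List Bool} {p : ℕ} (hp : p < D.length) :
    (psi D).getD p false = true ↔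
      ¬∃ p' < p, MatchPair D (zigR 0 D.length p') (zigR 0 D.length p) := by
  rw [List.getD_eq_getElem _ _ (by simpa [psi, psiR] using hp)]
  simp [psi, psiR]

lemma IsDyck.getD_psi_odd_eq_true_iff {D : List Bool} (hD : IsDyck D) {k : ℕ} (hk : 1 ≤ k)
    (hkL : 2 * k ≤ D.length) :
    (psi D).getD (2 * k - 1) false = true ↔ ∃ i, k ≤ i ∧ Matched D i (D.length - k) := by
  have hzig : zigR 0 D.length (2 * k - 1) = D.length - k := by
    simp only [zigR]; split_ifs <;> omega
  have hread := Set.exists_mem_image (f := zigR 0 D.length) (s := Set.Iio (2 * k - 1))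
    (p := fun q => MatchPair D q (D.length - k))
  simp only [zigR_zero_image_Iio hkL, Set.mem_Iio] at hread
  rw [getD_psi_eq_true_iff (by omega), hzig, ← hread]
  constructor
  · intro hunread
    obtain ⟨q, hq | hq⟩ := hD.exists_matchPair (i := D.length - k) (by omega)
    · exact absurd ⟨q, Or.inr ⟨hq.lt, hq.lt_length⟩, Or.inr hq⟩ hunread
    · refine ⟨q, not_lt.mp fun hqk => hunread ⟨q, Or.inl hqk, Or.inl hq⟩, hq⟩
  · rintro ⟨i, hki, hi⟩ ⟨q, hq, hM | hM⟩
    · have := hi.lt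
      rw [hM.unique_left hi] at hq
      simp only [Set.mem_union, Set.mem_Iio, Set.mem_Ioo] at hq
      omega
    · exact Bool.false_ne_true (hi.getD_right.symm.trans hM.getD_left)

def rightTunnelPairs (w : List Bool) : Set (ℕ × ℕ) :=
  {q | Matched w q.1 q.2 ∧ w.length ≤ q.1 + q.2}

lemma rtun_eq_ncard_rightTunnelPairs (w : List Bool) : rtun w = (rightTunnelPairs w).ncard := by
  have hset : {i | ∃ A B C : List Bool, IsDyck B ∧ w = A ++ true :: (B ++ false :: C) ∧
      A.length = i ∧ C.length + 2 * 0 < A.length} = Prod.fst '' rightTunnelPairs w := by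
    ext i
    constructor
    · rintro ⟨A, B, C, hB, hw, rfl, hlt⟩
      have hlen : w.length = A.length + B.length + C.length + 2 := by simp [hw]; omega
      exact ⟨(A.length, A.length + B.length + 1), ⟨⟨A, B, C, hB, hw, rfl, rfl⟩, by omega⟩, rfl⟩
    · rintro ⟨⟨i, j⟩, ⟨hM, hle⟩, rfl⟩
      dsimp only at hM hle ⊢
      obtain ⟨A, B, C, hB, hw, rfl, rfl⟩ := hM
      have hlen : w.length = A.length + B.length + C.length + 2 := by simp [hw]; omega
      exact ⟨A, B, C, hB, hw, rfl, by omega⟩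
  have hinj : Set.InjOn Prod.fst (rightTunnelPairs w) := by
    rintro ⟨i, j⟩ ⟨hij, -⟩ ⟨i', j'⟩ ⟨hij', -⟩ (rfl : i = i')
    exact Prod.ext rfl (hij.unique_right hij')
  rw [rtun, tunGt, hset, hinj.ncard_image]

lemma IsDyck.evenRises_psi_eq_ncard_rightTunnelPairs {D : List Bool} (hD : IsDyck D) :
    evenRises (psi D) = (rightTunnelPairs D).ncard := by
  set L := D.length
  have hset : {p | p < (psi D).length ∧ p % 2 = 1 ∧ (psi D).getD p false = true} =
      (fun q => 2 * (L - q.2) - 1) '' rightTunnelPairs D := by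
    ext p
    simp only [Set.mem_ofPred_eq, Set.mem_image, psi_length]
    constructor
    · rintro ⟨hp, hodd, hu⟩
      rw [show p = 2 * ((p + 1) / 2) - 1 by omega] at hu
      obtain ⟨i, hki, hi⟩ := (hD.getD_psi_odd_eq_true_iff (by omega) (by omega)).mp hu
      exact ⟨(i, L - (p + 1) / 2), ⟨hi, by simp only; omega⟩, by simp only; omega⟩
    · rintro ⟨⟨i, j⟩, ⟨hij, hle⟩, rfl⟩
      have := hij.lt
      have := hij.lt_length
      have hu := (hD.getD_psi_odd_eq_true_iff (k := L - j) (by omega) (by omega)).mpr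
        ⟨i, by omega, by rwa [show L - (L - j) = j by omega]⟩
      exact ⟨by omega, by omega, hu⟩
  have hinj : Set.InjOn (fun q : ℕ × ℕ => 2 * (L - q.2) - 1) (rightTunnelPairs D) := by
    rintro ⟨i, j⟩ ⟨hij, -⟩ ⟨i', j'⟩ ⟨hij', -⟩ h
    have := hij.lt_length
    have := hij'.lt_length
    obtain rfl : j = j' := by simp only at h; omega
    exact Prod.ext (hij.unique_left hij') rfl
  rw [evenRises, hset, hinj.ncard_image]

/-- for every Dyck word `D`, `rt(D) = er(Ψ(D))`. -/
theorem rtun_eq_evenRises_psi (D : List Bool) (hD : IsDyck D) :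
    rtun D = evenRises (psi D) := by
  rw [rtun_eq_ncard_rightTunnelPairs, hD.evenRises_psi_eq_ncard_rightTunnelPairs]

end DyckBij
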